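/- Let δ > 0 and let θ : ℝ → (0,∞) be a C^∞, convex, even function such that θ(t) = |t| if and only if |t| ≥ δ. Define M_δ : ℝ² → ℝ by M_δ(x,y) = (x + y + θ(x − y))/2, and for functions u, v : U → ℝ on an open convex set U ⊆ ℝⁿ define M_δ(u,v)(x) = M_δ(u(x), v(x)). If u and v are convex on U, then M_δ(u,v) is convex on U and satisfies: (a) if u, v ∈ C²(U), then M_δ(u,v) ∈ C²(U); (b) M_δ(u,v)(x) = u(x) whenever u(x) ≥ v(x) + δ, and M_δ(u,v)(x) = v(x) whenever v(x) ≥ u(x) + δ; (c) max{u,v} ≤ M_δ(u,v) ≤ max{u,v} + δ/2 on U; (d) if u and v are η-strongly convex for some η > 0, then M_δ(u,v) is η-strongly convex. -/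

import Mathlib

open MeasureTheory Metric Set Filter
open scoped ENNReal

/-- `u` is `η`-strongly convex on `s`: `x ↦ u x - (η/2)‖x‖²` is convex on `s`. -/
def StronglyConvexOnWith {n : ℕ} (η : ℝ) (s : Set (EuclideanSpace ℝ (Fin n)))
    (u : EuclideanSpace ℝ (Fin n) → ℝ) : Prop :=
  ConvexOn ℝ s (fun x => u x - η / 2 * ‖x‖ ^ 2)

/-- Auxiliary: convexity of `x ↦ (u x + v x + θ (u x - v x))/2`. -/
lemma aux_conv {n : ℕ} (θ : ℝ → ℝ) (hθconv : ConvexOn ℝ Set.univ θ)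
    (hlip1 : ∀ s t : ℝ, s ≤ t → θ t - θ s ≤ t - s)
    (hlip2 : ∀ s t : ℝ, s ≤ t → θ s - θ t ≤ t - s)
    (U : Set (EuclideanSpace ℝ (Fin n))) (hUconv : Convex ℝ U)
    (u v : EuclideanSpace ℝ (Fin n) → ℝ)
    (hu : ConvexOn ℝ U u) (hv : ConvexOn ℝ U v) :
    ConvexOn ℝ U (fun x => (u x + v x + θ (u x - v x)) / 2) := by
  refine ⟨hUconv, fun x hx y hy a b ha hb hab => ?_⟩
  have hp := hu.2 hx hy ha hb hab
  have hq := hv.2 hx hy ha hb hab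
  simp only [smul_eq_mul] at hp hq ⊢
  set z := a • x + b • y with hz
  set A := a * u x + b * u y with hA
  set B := a * v x + b * v y with hB
  have hθc := hθconv.2 (Set.mem_univ (u x - v x)) (Set.mem_univ (u y - v y)) ha hb hab
  simp only [smul_eq_mul] at hθc
  have harg : a * (u x - v x) + b * (u y - v y) = A - B := by rw [hA, hB]; ring
  rw [harg] at hθc
  have h1 : θ (u z - v z) - θ (A - v z) ≤ A - u z := by
    have := hlip2 (u z - v z) (A - v z) (by linarith)
    linarith
  have h2 : θ (A - v z) - θ (A - B) ≤ B - v z := by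
    have := hlip1 (A - B) (A - v z) (by linarith)
    linarith
  linarith

/-- Properties of the smooth maximum `M_δ(u,v) = (u + v + θ(u - v))/2`:
it is convex, `C²` when `u, v` are, coincides with the larger function where the gap
is at least `δ`, lies between `max{u,v}` and `max{u,v} + δ/2`, and preserves
`η`-strong convexity. -/
theorem smooth_maximum_properties {n : ℕ} (δ : ℝ) (hδ : 0 < δ)
    (θ : ℝ → ℝ) (hθpos : ∀ t, 0 < θ t) (hθsmooth : ContDiff ℝ (⊤ : ℕ∞) θ)
    (hθconv : ConvexOn ℝ Set.univ θ) (hθeven : ∀ t, θ (-t) = θ t)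
    (hθabs : ∀ t, θ t = |t| ↔ δ ≤ |t|)
    (U : Set (EuclideanSpace ℝ (Fin n))) (hUopen : IsOpen U) (hUconv : Convex ℝ U)
    (u v : EuclideanSpace ℝ (Fin n) → ℝ)
    (hu : ConvexOn ℝ U u) (hv : ConvexOn ℝ U v) :
    ConvexOn ℝ U (fun x => (u x + v x + θ (u x - v x)) / 2) ∧
    (ContDiffOn ℝ 2 u U → ContDiffOn ℝ 2 v U →
      ContDiffOn ℝ 2 (fun x => (u x + v x + θ (u x - v x)) / 2) U) ∧
    (∀ x ∈ U,
      (v x + δ ≤ u x → (u x + v x + θ (u x - v x)) / 2 = u x) ∧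
      (u x + δ ≤ v x → (u x + v x + θ (u x - v x)) / 2 = v x)) ∧
    (∀ x ∈ U,
      max (u x) (v x) ≤ (u x + v x + θ (u x - v x)) / 2 ∧
      (u x + v x + θ (u x - v x)) / 2 ≤ max (u x) (v x) + δ / 2) ∧
    (∀ η > (0 : ℝ), StronglyConvexOnWith η U u → StronglyConvexOnWith η U v →
      StronglyConvexOnWith η U (fun x => (u x + v x + θ (u x - v x)) / 2)) := by
  -- θ equals the identity on [δ, ∞)
  have hθid : ∀ t : ℝ, δ ≤ t → θ t = t := by
    intro t ht
    have habs : |t| = t := abs_of_nonneg (hδ.le.trans ht)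
    rw [(hθabs t).2 (by rw [habs]; exact ht), habs]
  -- θ t ≥ t
  have hge : ∀ t : ℝ, t ≤ θ t := by
    intro t
    by_cases h : δ ≤ t
    · rw [hθid t h]
    · push_neg at h
      have hslope := hθconv.slope_mono_adjacent (Set.mem_univ t) (Set.mem_univ (δ + 1))
        h (by linarith)
      rw [hθid δ le_rfl, hθid (δ + 1) (by linarith)] at hslope
      have h1 : (δ + 1 - δ) / (δ + 1 - δ) = 1 := by norm_num
      rw [h1] at hslope
      have hpos : 0 < δ - t := by linarith
      have := (div_le_one hpos).mp hslope
      linarith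
  -- θ t ≥ |t|
  have hgeabs : ∀ t : ℝ, |t| ≤ θ t := by
    intro t
    refine abs_le.mpr ⟨?_, hge t⟩
    have := hge (-t); rw [hθeven] at this; linarith
  -- Lipschitz from above on increasing pairs
  have hlip1 : ∀ s t : ℝ, s ≤ t → θ t - θ s ≤ t - s := by
    intro s t hst
    rcases eq_or_lt_of_le hst with rfl | hst
    · simp
    · set w := max t δ + 1 with hw
      have htw : t < w := by
        have : t ≤ max t δ := le_max_left _ _
        linarith
      have hwδ : δ ≤ w := by
        have : δ ≤ max t δ := le_max_right _ _
        linarith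
      have hslope := hθconv.slope_mono_adjacent (Set.mem_univ s) (Set.mem_univ w) hst htw
      rw [hθid w hwδ] at hslope
      have h2 : (w - θ t) / (w - t) ≤ 1 := by
        rw [div_le_one (by linarith)]
        have := hge t; linarith
      have h3 : (θ t - θ s) / (t - s) ≤ 1 := le_trans hslope h2
      have := (div_le_one (by linarith : (0:ℝ) < t - s)).mp h3
      linarith
  have hlip2 : ∀ s t : ℝ, s ≤ t → θ s - θ t ≤ t - s := by
    intro s t hst
    have := hlip1 (-t) (-s) (by linarith)
    rw [hθeven, hθeven] at this
    linarith
  -- θ t ≤ δ when |t| ≤ δ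
  have hle : ∀ t : ℝ, |t| ≤ δ → θ t ≤ δ := by
    intro t ht
    rw [abs_le] at ht
    have hδ2 : (0:ℝ) < 2 * δ := by linarith
    have ha : (0:ℝ) ≤ (δ - t) / (2 * δ) := div_nonneg (by linarith) hδ2.le
    have hb : (0:ℝ) ≤ (δ + t) / (2 * δ) := div_nonneg (by linarith) hδ2.le
    have hab : (δ - t) / (2 * δ) + (δ + t) / (2 * δ) = 1 := by field_simp; ring
    have hc := hθconv.2 (Set.mem_univ (-δ)) (Set.mem_univ δ) ha hb hab
    simp only [smul_eq_mul] at hc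
    have harg : (δ - t) / (2 * δ) * (-δ) + (δ + t) / (2 * δ) * δ = t := by
      field_simp; ring
    rw [harg] at hc
    have hθδ : θ δ = δ := hθid δ le_rfl
    have hθmδ : θ (-δ) = δ := by rw [hθeven]; exact hθδ
    rw [hθδ, hθmδ] at hc
    calc θ t ≤ (δ - t) / (2 * δ) * δ + (δ + t) / (2 * δ) * δ := hc
      _ = δ := by field_simp; ring
  -- θ t ≤ |t| + δ
  have hub : ∀ t : ℝ, θ t ≤ |t| + δ := by
    intro t
    by_cases h : δ ≤ |t|
    · rw [(hθabs t).2 h]; linarith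
    · push_neg at h
      have h1 := hle t h.le
      have h2 := abs_nonneg t
      linarith
  refine ⟨aux_conv θ hθconv hlip1 hlip2 U hUconv u v hu hv, ?_, ?_, ?_, ?_⟩
  · intro hu2 hv2
    have hcomp : ContDiffOn ℝ 2 (fun x => θ (u x - v x)) U :=
      (hθsmooth.of_le (by exact WithTop.coe_le_coe.mpr le_top)).comp_contDiffOn (hu2.sub hv2)
    exact ((hu2.add hv2).add hcomp).div_const 2
  · intro x hx
    constructor
    · intro h
      have harg : δ ≤ |u x - v x| := by rw [abs_of_nonneg (by linarith)]; linarith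
      rw [(hθabs _).2 harg, abs_of_nonneg (by linarith)]; ring
    · intro h
      have harg : δ ≤ |u x - v x| := by rw [abs_of_nonpos (by linarith)]; linarith
      rw [(hθabs _).2 harg, abs_of_nonpos (by linarith)]; ring
  · intro x hx
    have h1 := hgeabs (u x - v x)
    have h2 := hub (u x - v x)
    rcases le_total (u x) (v x) with h | h
    · rw [max_eq_right h, abs_of_nonpos (by linarith)] at *
      constructor <;> linarith
    · rw [max_eq_left h, abs_of_nonneg (by linarith)] at *
      constructor <;> linarith
  · intro η hη hsu hsv
    unfold StronglyConvexOnWith at *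
    have key := aux_conv θ hθconv hlip1 hlip2 U hUconv _ _ hsu hsv
    have heq : (fun x => ((u x - η / 2 * ‖x‖ ^ 2) + (v x - η / 2 * ‖x‖ ^ 2) +
        θ ((u x - η / 2 * ‖x‖ ^ 2) - (v x - η / 2 * ‖x‖ ^ 2))) / 2) =
        (fun x => (u x + v x + θ (u x - v x)) / 2 - η / 2 * ‖x‖ ^ 2) := by
      funext x
      rw [show (u x - η / 2 * ‖x‖ ^ 2) - (v x - η / 2 * ‖x‖ ^ 2) = u x - v x by ring]
      ring
    rw [heq] at key
    exact key
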